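/- arXiv:1603.02525 — 3 statements merged into one kernel-verified Lean document; each statement's English description precedes it below -/
import Mathlib

section
/- The map f': D_{2k}^e → D_{2k}^{e+1} defined by decomposing x ∈ D_{2k}^e (with e < k) as x = u ∘ U ∘ v ∘ D ∘ w, where the U-step at position a is the first U-step above the line y=0 and the D-step at position b is the first D-step thereafter returning to the line y=0, and setting f'(x) := v ∘ D ∘ u ∘ U ∘ w, is a bijection between D_{2k}^e and D_{2k}^{e+1} for every e ∈ {0,1,...,k-1}. -/
/-- Value of a step: `true` = U-step (+1), `false` = D-step (-1). -/
def stepVal (b : Bool) : ℤ := if b then 1 else -1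

/-- Height of the lattice path `x` after its first `i` steps. -/
def pathHeight (x : List Bool) (i : ℕ) : ℤ := ((x.take i).map stepVal).sum

/-- The step at position `i` (0-indexed) is a U-step. -/
def isU (x : List Bool) (i : ℕ) : Bool := x.getD i true

/-- The step at position `i` (0-indexed) is a D-step. -/
def isD (x : List Bool) (i : ℕ) : Bool := !(x.getD i true)

/-- Number of flaws: D-steps lying below the line y=0 (i.e. starting at height ≤ 0). -/
def flaws (x : List Bool) : ℕ :=
  ((List.range x.length).filter (fun i => isD x i && decide (pathHeight x i ≤ 0))).length

/-- `DyckSet k e` = the set `D_{2k}^e` of Dyck paths with `2k` steps and `e` flaws. -/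
def DyckSet (k e : ℕ) : Set (List Bool) :=
  {x | x.length = 2*k ∧ x.count true = k ∧ flaws x = e}

/-- `LSet k m` = the set `L_{2k,m}` of lattice paths with `2k` steps and `m` U-steps. -/
def LSet (k m : ℕ) : Set (List Bool) :=
  {x | x.length = 2*k ∧ x.count true = m}

/-- `d_c(x)`: number of D-steps of `x` starting on the line `y = c`. -/
def dstart (x : List Bool) (c : ℤ) : ℕ :=
  ((List.range x.length).filter (fun i => isD x i && decide (pathHeight x i = c))).length

/-- `u_c(x)`: number of U-steps of `x` starting on the line `y = c`. -/
def ustart (x : List Bool) (c : ℤ) : ℕ :=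
  ((List.range x.length).filter (fun i => isU x i && decide (pathHeight x i = c))).length

/-- Positions (in increasing order) of D-steps of `x` touching the line `y = c`
(a D-step at position `i` goes from height `pathHeight x i` down to `pathHeight x i - 1`,
so it touches `y = c` iff its start height is `c` or `c+1`). -/
def dtouch (x : List Bool) (c : ℤ) : List ℕ :=
  (List.range x.length).filter
    (fun i => isD x i && (decide (pathHeight x i = c) || decide (pathHeight x i = c+1)))

/-- Positions (in increasing order) of U-steps of `x` touching the line `y = c`
(a U-step at position `i` goes from height `pathHeight x i` up to `pathHeight x i + 1`,
so it touches `y = c` iff its start height is `c` or `c-1`). -/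
def utouch (x : List Bool) (c : ℤ) : List ℕ :=
  (List.range x.length).filter
    (fun i => isU x i && (decide (pathHeight x i = c) || decide (pathHeight x i = c-1)))

/-- Position (0-indexed) flipped by `g`: the `(d_0(x)+1)`-th D-step touching `y=0`. -/
def gIdx (x : List Bool) : ℕ := (dtouch x 0).getD (dstart x 0) 0

/-- The map `g`: flip the `(d_0(x)+1)`-th D-step of `x` touching the line `y=0`. -/
def gMap (x : List Bool) : List Bool := x.set (gIdx x) true

/-- Position (0-indexed) flipped by `h`: the `u_1(x)`-th U-step touching `y=1`. -/
def hIdx (x : List Bool) : ℕ := (utouch x 1).getD (ustart x 1 - 1) 0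

/-- The map `h`: flip the `u_1(x)`-th U-step of `x` touching the line `y=1`. -/
def hMap (x : List Bool) : List Bool := x.set (hIdx x) false

/-- Position (0-indexed) flipped by `g'`: the `d_0(x)`-th D-step touching `y=0`. -/
def g'Idx (x : List Bool) : ℕ := (dtouch x 0).getD (dstart x 0 - 1) 0

/-- The map `g'`: flip the `d_0(x)`-th D-step of `x` touching the line `y=0`. -/
def g'Map (x : List Bool) : List Bool := x.set (g'Idx x) true

/-- Position (0-indexed) flipped by `h'`: the `(u_1(x)+1)`-th U-step touching `y=1`. -/
def h'Idx (x : List Bool) : ℕ := (utouch x 1).getD (ustart x 1) 0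

/-- The map `h'`: flip the `(u_1(x)+1)`-th U-step of `x` touching the line `y=1`. -/
def h'Map (x : List Bool) : List Bool := x.set (h'Idx x) false

/-- The minimum-change map `f := h ∘ g`. -/
def fMap (x : List Bool) : List Bool := hMap (gMap x)

/-- `piSeq n x`: the sequence of (1-indexed) positions flipped by the successive
applications `g, h, g, h, ...` over `n` applications of `f` starting from `x`. -/
def piSeq : ℕ → List Bool → List ℕ
  | 0, _ => []
  | n+1, x => (gIdx x + 1) :: (hIdx (gMap x) + 1) :: piSeq n (fMap x)

/-- Reverse the step sequence and complement every step. -/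
def revComp (x : List Bool) : List Bool := x.reverse.map (fun b => !b)


/-- `a`: position (0-indexed) of the first U-step of `x` lying above the line `y=0`
(i.e. starting at height ≥ 0). -/
def aIdx (x : List Bool) : ℕ :=
  ((List.range x.length).filter (fun i => isU x i && decide (0 ≤ pathHeight x i))).headD 0

/-- `b`: position (0-indexed) of the first D-step after `a` returning to the line `y=0`
(i.e. ending at height 0, so starting at height 1). -/
def bIdx (x : List Bool) : ℕ :=
  ((List.range x.length).filter
    (fun i => decide (aIdx x < i) && isD x i && decide (pathHeight x i = 1))).headD 0

/-- The classical Chung-Feller bijection `f'`: writing `x = u ∘ U ∘ v ∘ D ∘ w`,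
set `f'(x) := v ∘ D ∘ u ∘ U ∘ w`. -/
def fPrime (x : List Bool) : List Bool :=
  ((x.drop (aIdx x + 1)).take (bIdx x - aIdx x - 1)) ++ [false] ++
    (x.take (aIdx x)) ++ [true] ++ (x.drop (bIdx x + 1))

/-!
Call `u` a negative excursion if it returns to its starting level and never rises above it, and
`v` a positive excursion if it returns to its starting level and never falls below it. A path
of net height `0` with a point above level `0` splits as `x = u ∘ U ∘ v ∘ D ∘ w` with `u` a
negative and `v` a positive excursion (cut before the first step up to level `1`, then at the
next return to `0`), and for such a splitting the indices `a`, `b` of `f'` are exactly the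
positions of this `U` and `D`, so `f'(x) = v ∘ D ∘ u ∘ U ∘ w`. In both paths every D-step of `u`
is a flaw, no D-step of `v` is, `w` starts at level `0`, and only in `f'(x)` is the displayed `D`
a flaw: `f'` raises the number of flaws by exactly one. A path with a flaw falls below `0` and
splits as `v ∘ D ∘ u ∘ U ∘ w` in the same way. Complementing every step exchanges negative and
positive excursions, so conjugating `f'` by the complement maps `v ∘ D ∘ u ∘ U ∘ w` back to
`u ∘ U ∘ v ∘ D ∘ w`: it is the inverse of `f'`.
-/

def netHeight (x : List Bool) : ℤ := (x.map stepVal).sum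

@[simp] lemma netHeight_nil : netHeight [] = 0 := rfl

@[simp] lemma netHeight_cons (b : Bool) (x : List Bool) :
    netHeight (b :: x) = stepVal b + netHeight x := by
  simp [netHeight]

@[simp] lemma netHeight_append (x y : List Bool) :
    netHeight (x ++ y) = netHeight x + netHeight y := by
  simp [netHeight]

lemma netHeight_eq_count_sub_count (x : List Bool) :
    netHeight x = x.count true - x.count false := by
  induction x with
  | nil => rfl
  | cons b x ih => cases b <;> simp [ih, stepVal] <;> ring

lemma pathHeight_eq_netHeight_take (x : List Bool) (i : ℕ) :
    pathHeight x i = netHeight (x.take i) := rfl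

@[simp] lemma pathHeight_zero (x : List Bool) : pathHeight x 0 = 0 := rfl

lemma pathHeight_cons_succ (b : Bool) (x : List Bool) (i : ℕ) :
    pathHeight (b :: x) (i + 1) = stepVal b + pathHeight x i := by
  simp [pathHeight]

lemma pathHeight_of_length_le {x : List Bool} {i : ℕ} (h : x.length ≤ i) :
    pathHeight x i = netHeight x := by
  rw [pathHeight_eq_netHeight_take, List.take_of_length_le h]

lemma pathHeight_succ {x : List Bool} {i : ℕ} (h : i < x.length) :
    pathHeight x (i + 1) = pathHeight x i + stepVal x[i] := by
  rw [pathHeight, pathHeight, List.take_add_one, List.getElem?_eq_getElem h, Option.toList_some,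
    List.map_append, List.sum_append]
  simp

lemma pathHeight_take (x : List Bool) (m i : ℕ) :
    pathHeight (x.take m) i = pathHeight x (min i m) := by
  simp [pathHeight, List.take_take, min_comm]

lemma pathHeight_append_of_le {x : List Bool} (y : List Bool) {i : ℕ} (h : i ≤ x.length) :
    pathHeight (x ++ y) i = pathHeight x i := by
  simp [pathHeight, List.take_append_of_le_length h]

lemma pathHeight_append_length_add (x y : List Bool) (j : ℕ) :
    pathHeight (x ++ y) (x.length + j) = netHeight x + pathHeight y j := by
  simp [pathHeight, List.take_append, netHeight, List.take_of_length_le]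

lemma pathHeight_map_not (x : List Bool) (i : ℕ) :
    pathHeight (x.map not) i = -pathHeight x i := by
  induction x generalizing i with
  | nil => simp [pathHeight]
  | cons b x ih =>
    cases i with
    | zero => simp
    | succ i => cases b <;> simp [pathHeight_cons_succ, ih, stepVal] <;> ring

lemma netHeight_map_not (x : List Bool) : netHeight (x.map not) = -netHeight x := by
  simpa [pathHeight_of_length_le] using pathHeight_map_not x x.length

def flawsFrom : ℤ → List Bool → ℕ
  | _, [] => 0
  | c, b :: x => (if b = false ∧ c ≤ 0 then 1 else 0) + flawsFrom (c + stepVal b) x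

lemma flawsFrom_eq_countP (c : ℤ) (x : List Bool) :
    flawsFrom c x = (List.range x.length).countP
      (fun i => !x.getD i true && decide (c + pathHeight x i ≤ 0)) := by
  induction x generalizing c with
  | nil => rfl
  | cons b x ih =>
    rw [List.length_cons, List.range_succ_eq_map, List.countP_cons, List.countP_map, flawsFrom,
      ih, add_comm]
    congr 1
    · congr 1
      funext i
      simp [pathHeight_cons_succ, add_assoc]
    · cases b <;> simp

lemma flaws_eq_flawsFrom (x : List Bool) : flaws x = flawsFrom 0 x := by
  simp [flaws, flawsFrom_eq_countP, isD, List.countP_eq_length_filter]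

lemma flawsFrom_append (c : ℤ) (x y : List Bool) :
    flawsFrom c (x ++ y) = flawsFrom c x + flawsFrom (c + netHeight x) y := by
  induction x generalizing c with
  | nil => simp [flawsFrom]
  | cons b x ih => simp [flawsFrom, ih, add_assoc]

lemma flawsFrom_eq_count_false {c : ℤ} {x : List Bool} (h : ∀ i, c + pathHeight x i ≤ 0) :
    flawsFrom c x = x.count false := by
  induction x generalizing c with
  | nil => rfl
  | cons b x ih =>
    have hc : c ≤ 0 := by simpa using h 0
    have hx : ∀ i, c + stepVal b + pathHeight x i ≤ 0 := fun i => by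
      simpa [pathHeight_cons_succ, add_assoc] using h (i + 1)
    cases b <;> simp [flawsFrom, hc, ih hx, add_comm]

lemma flawsFrom_eq_zero {c : ℤ} {x : List Bool} (h : ∀ i, 0 ≤ c + pathHeight x i) :
    flawsFrom c x = 0 := by
  induction x generalizing c with
  | nil => rfl
  | cons b x ih =>
    have hx : ∀ i, 0 ≤ c + stepVal b + pathHeight x i := fun i => by
      simpa [pathHeight_cons_succ, add_assoc] using h (i + 1)
    have hc : b = false → 0 < c := fun hb => by
      have := h 1
      simp [pathHeight_cons_succ, hb, stepVal] at this
      omega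
    cases b <;> simp_all [flawsFrom]

-- For `i ≥ x.length`, `pathHeight x i` is the net height, so quantifying over all `i` is harmless.
def IsNegExcursion (x : List Bool) : Prop := netHeight x = 0 ∧ ∀ i, pathHeight x i ≤ 0

def IsPosExcursion (x : List Bool) : Prop := netHeight x = 0 ∧ ∀ i, 0 ≤ pathHeight x i

lemma IsPosExcursion.map_not {x : List Bool} (hx : IsPosExcursion x) :
    IsNegExcursion (x.map not) := by
  simpa [IsNegExcursion, IsPosExcursion, netHeight_map_not, pathHeight_map_not] using hx

lemma IsNegExcursion.map_not {x : List Bool} (hx : IsNegExcursion x) :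
    IsPosExcursion (x.map not) := by
  simpa [IsNegExcursion, IsPosExcursion, netHeight_map_not, pathHeight_map_not] using hx

lemma IsNegExcursion.pathHeight_lt_zero {x : List Bool} (hx : IsNegExcursion x) {i : ℕ}
    (hi : i < x.length) (hU : x[i] = true) : pathHeight x i < 0 := by
  have := hx.2 (i + 1)
  rw [pathHeight_succ hi, hU] at this
  simp [stepVal] at this
  omega

lemma IsPosExcursion.pathHeight_pos {x : List Bool} (hx : IsPosExcursion x) {i : ℕ}
    (hi : i < x.length) (hD : x[i] = false) : 0 < pathHeight x i := by
  have := hx.2 (i + 1)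
  rw [pathHeight_succ hi, hD] at this
  simp [stepVal] at this
  omega

-- Cut `y` at its first step down to level `-1`.
lemma exists_posExcursion_append_false {y : List Bool} (hy : ∃ n, pathHeight y n < 0) :
    ∃ v w, IsPosExcursion v ∧ y = v ++ false :: w := by
  classical
  obtain ⟨m, hm⟩ : ∃ m, Nat.find hy = m + 1 :=
    Nat.exists_eq_add_one.mpr (Nat.pos_of_ne_zero fun h => by simpa [h] using Nat.find_spec hy)
  have hmin : ∀ i ≤ m, 0 ≤ pathHeight y i := fun i hi =>
    not_lt.mp (Nat.find_min hy (by omega))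
  have hdrop := Nat.find_spec hy
  rw [hm] at hdrop
  have hlen : m < y.length := by
    by_contra! h
    have := hmin m le_rfl
    rw [pathHeight_of_length_le h] at this
    rw [pathHeight_of_length_le (by omega)] at hdrop
    omega
  rw [pathHeight_succ hlen] at hdrop
  have hD : y[m] = false := by
    cases h : y[m]
    · rfl
    · have := hmin m le_rfl
      simp [h, stepVal] at hdrop
      omega
  refine ⟨y.take m, y.drop (m + 1), ⟨?_, fun i => ?_⟩, ?_⟩
  · have := hmin m le_rfl
    simp only [hD, stepVal] at hdrop
    rw [← pathHeight_eq_netHeight_take]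
    omega
  · rw [pathHeight_take]
    exact hmin _ (min_le_right _ _)
  · rw [← hD, ← List.drop_eq_getElem_cons hlen, List.take_append_drop]

lemma exists_negExcursion_append_true {y : List Bool} (hy : ∃ n, 0 < pathHeight y n) :
    ∃ u w, IsNegExcursion u ∧ y = u ++ true :: w := by
  obtain ⟨n, hn⟩ := hy
  obtain ⟨v, w, hv, hvw⟩ := exists_posExcursion_append_false (y := y.map not)
    ⟨n, by rw [pathHeight_map_not]; omega⟩
  refine ⟨v.map not, w.map not, hv.map_not, ?_⟩
  simpa [Function.comp_def] using congrArg (List.map not) hvw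

lemma exists_excursion_decomposition {x : List Bool} (hx : netHeight x = 0)
    (hpos : ∃ n, 0 < pathHeight x n) :
    ∃ u v w, IsNegExcursion u ∧ IsPosExcursion v ∧ x = u ++ true :: v ++ false :: w := by
  obtain ⟨u, y, hu, rfl⟩ := exists_negExcursion_append_true hpos
  have hy : pathHeight y y.length < 0 := by
    simp [pathHeight_of_length_le, hu.1, stepVal] at hx ⊢
    omega
  obtain ⟨v, w, hv, rfl⟩ := exists_posExcursion_append_false ⟨_, hy⟩
  exact ⟨u, v, w, hu, hv, by simp⟩

lemma headD_filter_range_eq {P : ℕ → Bool} {n m : ℕ} (d : ℕ) (hm : m < n) (hPm : P m = true)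
    (hlt : ∀ i < m, P i = false) : ((List.range n).filter P).headD d = m := by
  obtain ⟨r, rfl⟩ : ∃ r, n = m + (r + 1) := ⟨n - m - 1, by omega⟩
  have hnil : (List.range m).filter P = [] :=
    List.filter_eq_nil_iff.mpr fun i hi => by simp [hlt i (List.mem_range.mp hi)]
  rw [List.range_add, List.filter_append, hnil, List.range_succ_eq_map]
  simp [hPm]

lemma getD_append_length_add (x y : List Bool) (j : ℕ) (d : Bool) :
    (x ++ y).getD (x.length + j) d = y.getD j d := by
  rw [List.getD_append_right _ _ _ _ (by omega), Nat.add_sub_cancel_left]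

lemma aIdx_append {u : List Bool} (hu : IsNegExcursion u) (y : List Bool) :
    aIdx (u ++ true :: y) = u.length := by
  refine headD_filter_range_eq _ (by simp) ?_ fun i hi => ?_
  · simp [isU, pathHeight_append_of_le, pathHeight_of_length_le, hu.1]
  · have hU := hu.pathHeight_lt_zero hi
    simp only [isU, List.getD_append _ _ _ _ hi, List.getD_eq_getElem _ _ hi,
      pathHeight_append_of_le _ hi.le]
    cases h : u[i] with
    | false => simp
    | true => simp [(hU h).not_ge]

lemma bIdx_append {u v : List Bool} (hu : IsNegExcursion u) (hv : IsPosExcursion v)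
    (w : List Bool) :
    bIdx (u ++ true :: v ++ false :: w) = u.length + 1 + v.length := by
  have ha : aIdx (u ++ true :: v ++ false :: w) = u.length := by
    simpa using aIdx_append hu (v ++ false :: w)
  have hsplit : u ++ true :: v ++ false :: w = (u ++ [true]) ++ (v ++ false :: w) := by simp
  have hlen : u.length + 1 = (u ++ [true]).length := by simp
  have hup : netHeight (u ++ [true]) = 1 := by simp [hu.1, stepVal]
  rw [bIdx, ha, hsplit, hlen]
  refine headD_filter_range_eq _ (by simp; omega) ?_ fun i hi => ?_
  · have hD : (v ++ false :: w).getD v.length true = false := by simp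
    have hh : pathHeight (v ++ false :: w) v.length = 0 := by
      rw [pathHeight_append_of_le _ le_rfl, pathHeight_of_length_le le_rfl, hv.1]
    simp only [isD, getD_append_length_add, pathHeight_append_length_add, hup, hh, hD]
    simp only [Bool.not_false, Bool.and_true, add_zero, decide_true, decide_eq_true_eq]
    omega
  · rcases Nat.lt_or_ge (u.length) i with hui | hiu
    · obtain ⟨j, rfl⟩ : ∃ j, i = (u ++ [true]).length + j := ⟨i - (u.length + 1), by simp; omega⟩
      have hj : j < v.length := by omega
      have hpos := hv.pathHeight_pos hj
      simp only [isD, getD_append_length_add, pathHeight_append_length_add, hup,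
        List.getD_append _ _ _ _ hj, List.getD_eq_getElem _ _ hj, pathHeight_append_of_le _ hj.le]
      cases h : v[j] with
      | true => simp
      | false => have := hpos h; simp; omega
    · simp [hiu.not_gt]

lemma fPrime_append {u v : List Bool} (hu : IsNegExcursion u) (hv : IsPosExcursion v)
    (w : List Bool) :
    fPrime (u ++ true :: v ++ false :: w) = v ++ false :: u ++ true :: w := by
  have ha : aIdx (u ++ true :: v ++ false :: w) = u.length := by
    simpa using aIdx_append hu (v ++ false :: w)
  have hvlen : u.length + 1 + v.length - u.length - 1 = v.length := by omega
  have hwpos : u.length + 1 + v.length + 1 = u.length + (1 + v.length + 1) := by omega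
  rw [fPrime, ha, bIdx_append hu hv, hvlen, hwpos]
  simp [List.drop_append, List.drop_eq_nil_of_le, Nat.add_comm 1 v.length]

lemma flaws_swap {u v : List Bool} (hu : IsNegExcursion u) (hv : IsPosExcursion v)
    (w : List Bool) :
    flaws (v ++ false :: u ++ true :: w) = flaws (u ++ true :: v ++ false :: w) + 1 := by
  have hu0 : flawsFrom 0 u = u.count false := flawsFrom_eq_count_false (by simpa using hu.2)
  have hu1 : flawsFrom (-1) u = u.count false :=
    flawsFrom_eq_count_false fun i => by linarith [hu.2 i]
  have hv0 : flawsFrom 0 v = 0 := flawsFrom_eq_zero (by simpa using hv.2)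
  have hv1 : flawsFrom 1 v = 0 := flawsFrom_eq_zero fun i => by linarith [hv.2 i]
  simp [flaws_eq_flawsFrom, flawsFrom_append, flawsFrom, hu.1, hv.1, stepVal, hu0, hu1, hv0, hv1]
  omega

lemma swap_mem_dyckSet_succ_iff {u v : List Bool} (hu : IsNegExcursion u)
    (hv : IsPosExcursion v) (w : List Bool) {k e : ℕ} :
    v ++ false :: u ++ true :: w ∈ DyckSet k (e + 1) ↔
      u ++ true :: v ++ false :: w ∈ DyckSet k e := by
  simp only [DyckSet, Set.mem_ofPred_eq, flaws_swap hu hv, Nat.add_right_cancel_iff]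
  simp
  omega

def fPrimeInv (y : List Bool) : List Bool := (fPrime (y.map not)).map not

lemma fPrimeInv_append {u v : List Bool} (hu : IsNegExcursion u) (hv : IsPosExcursion v)
    (w : List Bool) :
    fPrimeInv (v ++ false :: u ++ true :: w) = u ++ true :: v ++ false :: w := by
  have hnot : (v ++ false :: u ++ true :: w).map not
      = v.map not ++ true :: u.map not ++ false :: w.map not := by simp
  rw [fPrimeInv, hnot, fPrime_append hv.map_not hu.map_not]
  simp [Function.comp_def]

lemma netHeight_eq_zero_of_mem_dyckSet {x : List Bool} {k e : ℕ} (hx : x ∈ DyckSet k e) :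
    netHeight x = 0 := by
  obtain ⟨hlen, hk, -⟩ := hx
  have := List.count_true_add_count_false x
  rw [netHeight_eq_count_sub_count]
  omega

lemma exists_excursion_decomposition_of_mem_dyckSet {x : List Bool} {k e : ℕ}
    (hx : x ∈ DyckSet k e) (he : e < k) :
    ∃ u v w, IsNegExcursion u ∧ IsPosExcursion v ∧ x = u ++ true :: v ++ false :: w := by
  refine exists_excursion_decomposition (netHeight_eq_zero_of_mem_dyckSet hx) ?_
  by_contra! h
  have hfl : flaws x = x.count false := by
    rw [flaws_eq_flawsFrom, flawsFrom_eq_count_false (by simpa using h)]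
  have := List.count_true_add_count_false x
  obtain ⟨hlen, hk, hflaws⟩ := hx
  omega

lemma exists_swapped_excursion_decomposition_of_mem_dyckSet_succ {y : List Bool} {k e : ℕ}
    (hy : y ∈ DyckSet k (e + 1)) :
    ∃ u v w, IsNegExcursion u ∧ IsPosExcursion v ∧ y = v ++ false :: u ++ true :: w := by
  have hneg : ∃ n, pathHeight y n < 0 := by
    by_contra! h
    have : flaws y = 0 := by rw [flaws_eq_flawsFrom, flawsFrom_eq_zero (by simpa using h)]
    exact absurd hy.2.2 (by omega)
  obtain ⟨u, v, w, hu, hv, hy'⟩ := exists_excursion_decomposition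
    (x := y.map not) (by simp [netHeight_map_not, netHeight_eq_zero_of_mem_dyckSet hy])
    (by simpa [pathHeight_map_not] using hneg)
  refine ⟨v.map not, u.map not, w.map not, hv.map_not, hu.map_not, ?_⟩
  simpa [Function.comp_def] using congrArg (List.map not) hy'

theorem fPrime_bijection (k e : ℕ) (he : e < k) :
    Set.BijOn fPrime (DyckSet k e) (DyckSet k (e+1)) := by
  refine Set.InvOn.bijOn (f' := fPrimeInv) ⟨fun x hx => ?_, fun y hy => ?_⟩
    (fun x hx => ?_) (fun y hy => ?_)
  · obtain ⟨u, v, w, hu, hv, rfl⟩ := exists_excursion_decomposition_of_mem_dyckSet hx he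
    rw [fPrime_append hu hv, fPrimeInv_append hu hv]
  · obtain ⟨u, v, w, hu, hv, rfl⟩ := exists_swapped_excursion_decomposition_of_mem_dyckSet_succ hy
    rw [fPrimeInv_append hu hv, fPrime_append hu hv]
  · obtain ⟨u, v, w, hu, hv, rfl⟩ := exists_excursion_decomposition_of_mem_dyckSet hx he
    rwa [fPrime_append hu hv, swap_mem_dyckSet_succ_iff hu hv]
  · obtain ⟨u, v, w, hu, hv, rfl⟩ := exists_swapped_excursion_decomposition_of_mem_dyckSet_succ hy
    rwa [fPrimeInv_append hu hv, ← swap_mem_dyckSet_succ_iff hu hv]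
end

section
/- For any Dyck path x with 2k steps and e flaws, where e < k, the path f(x) := h(g(x)) is a Dyck path with 2k steps and exactly e+1 flaws. -/
open Finset

namespace LatticePath

-- Integer-valued, so that the counting identities below can be subtracted without truncation.
def countIco (P : ℕ → Bool) (a b : ℕ) : ℤ := ∑ i ∈ Ico a b, ((P i).toNat : ℤ)

section countIco

variable {P Q R : ℕ → Bool} {a b c : ℕ}

lemma countIco_self : countIco P a a = 0 := by simp [countIco]

lemma countIco_add (hab : a ≤ b) (hbc : b ≤ c) :
    countIco P a b + countIco P b c = countIco P a c :=
  sum_Ico_consecutive _ hab hbc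

lemma countIco_succ (hab : a ≤ b) : countIco P a (b + 1) = countIco P a b + (P b).toNat :=
  sum_Ico_succ_top hab _

lemma countIco_eq_toNat_add (hab : a < b) :
    countIco P a b = (P a).toNat + countIco P (a + 1) b :=
  sum_eq_sum_Ico_succ_bot hab _

lemma countIco_nonneg : 0 ≤ countIco P a b := sum_nonneg fun _ _ => by positivity

lemma countIco_congr (h : ∀ i, a ≤ i → i < b → P i = Q i) : countIco P a b = countIco Q a b :=
  sum_congr rfl fun i hi => by rw [h i (mem_Ico.1 hi).1 (mem_Ico.1 hi).2]

lemma countIco_eq_add (h : ∀ i, a ≤ i → i < b → ((R i).toNat : ℤ) = (P i).toNat + (Q i).toNat) :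
    countIco R a b = countIco P a b + countIco Q a b := by
  rw [countIco, countIco, countIco, ← sum_add_distrib]
  exact sum_congr rfl fun i hi => h i (mem_Ico.1 hi).1 (mem_Ico.1 hi).2

lemma exists_of_countIco_pos (h : 0 < countIco P a b) : ∃ i, a ≤ i ∧ i < b ∧ P i = true := by
  obtain ⟨i, hi, hPi⟩ := exists_ne_zero_of_sum_ne_zero h.ne'
  exact ⟨i, (mem_Ico.1 hi).1, (mem_Ico.1 hi).2, by simpa using hPi⟩

lemma countIco_split (P : ℕ → Bool) {p q n : ℕ} (hqp : q < p) (hp : p < n) :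
    countIco P 0 n = countIco P 0 q + (P q).toNat + countIco P (q + 1) p + (P p).toNat +
      countIco P (p + 1) n := by
  rw [← countIco_add q.zero_le (hqp.trans hp).le, countIco_eq_toNat_add (hqp.trans hp),
    ← countIco_add hqp hp.le, countIco_eq_toNat_add hp]
  ring

lemma length_filter_range (P : ℕ → Bool) (n : ℕ) :
    (((List.range n).filter P).length : ℤ) = countIco P 0 n := by
  induction n with
  | zero => simp [countIco]
  | succ n ih =>
    rw [List.range_succ, List.filter_append, List.length_append, countIco_succ n.zero_le, ← ih]
    cases h : P n <;> simp [List.filter, h]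

lemma length_filter_range_lt {v n : ℕ} (hvn : v < n) (hv : P v = true) :
    ((List.range v).filter P).length < ((List.range n).filter P).length := by
  have := countIco_nonneg (P := P) (a := v + 1) (b := n)
  have := countIco_add (P := P) v.zero_le hvn.le
  rw [countIco_eq_toNat_add hvn, hv] at this
  zify
  rw [length_filter_range, length_filter_range]
  simp only [Bool.toNat_true, Nat.cast_one] at this
  linarith

lemma getD_filter_range {v n : ℕ} (hvn : v < n) (hv : P v = true) :
    ((List.range n).filter P).getD ((List.range v).filter P).length 0 = v := by
  induction n with
  | zero => omega
  | succ n ih =>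
    rw [List.range_succ, List.filter_append]
    rcases Nat.lt_succ_iff_lt_or_eq.1 hvn with hlt | rfl
    · rw [List.getD_append _ _ _ _ (length_filter_range_lt hlt hv), ih hlt]
    · simp [hv]

lemma exists_length_filter_range_eq {i n : ℕ} (hi : i < ((List.range n).filter P).length) :
    ∃ v < n, P v = true ∧ ((List.range v).filter P).length = i := by
  induction n with
  | zero => simp at hi
  | succ n ih =>
    by_cases h : i < ((List.range n).filter P).length
    · obtain ⟨v, hv, hPv, hlen⟩ := ih h
      exact ⟨v, by omega, hPv, hlen⟩
    · rw [List.range_succ, List.filter_append] at hi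
      cases hPn : P n <;> simp [List.filter, hPn] at hi
      · omega
      · exact ⟨n, by omega, hPn, by omega⟩

end countIco

lemma getD_set_of_ne {α : Type*} {l : List α} {v d : α} {p i : ℕ} (h : p ≠ i) :
    (l.set p v).getD i d = l.getD i d := by
  simp [List.getD_eq_getElem?_getD, List.getElem?_set_ne h]

lemma getD_set_self {α : Type*} {l : List α} {v d : α} {p : ℕ} (hp : p < l.length) :
    (l.set p v).getD p d = v := by
  simp [List.getD_eq_getElem?_getD, hp]

def upAt (x : List Bool) (c : ℤ) (i : ℕ) : Bool := isU x i && decide (pathHeight x i = c)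

def downAt (x : List Bool) (c : ℤ) (i : ℕ) : Bool := isD x i && decide (pathHeight x i = c)

def flawAt (x : List Bool) (i : ℕ) : Bool := isD x i && decide (pathHeight x i ≤ 0)

def touchD (x : List Bool) (i : ℕ) : Bool := downAt x 0 i || downAt x 1 i

def touchU (x : List Bool) (i : ℕ) : Bool := upAt x 0 i || upAt x 1 i

section path

variable {x : List Bool} {a b p : ℕ}

lemma pathHeight_zero (x : List Bool) : pathHeight x 0 = 0 := by simp [pathHeight]

lemma pathHeight_succ (hb : b < x.length) :
    pathHeight x (b + 1) = pathHeight x b + stepVal (x.getD b true) := by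
  rw [pathHeight, pathHeight, List.take_add_one, List.getElem?_eq_getElem hb]
  simp [List.getD_eq_getElem?_getD, hb]

lemma pathHeight_length (x : List Bool) : pathHeight x x.length = 2 * x.count true - x.length := by
  rw [pathHeight, List.take_length]
  induction x with
  | nil => simp
  | cons a t ih => cases a <;> simp [ih, stepVal] <;> ring

lemma pathHeight_set (hp : p < x.length) (v : Bool) (j : ℕ) :
    pathHeight (x.set p v) j =
      pathHeight x j + if p < j then stepVal v - stepVal (x.getD p true) else 0 := by
  induction x generalizing p j with
  | nil => simp at hp
  | cons a t ih =>
    cases p <;> cases j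
    · simp [pathHeight_zero]
    · simp [pathHeight]; ring
    · simp [pathHeight_zero]
    · rename_i p j
      simp only [pathHeight, List.set_cons_succ, List.take_succ_cons, List.map_cons,
        List.sum_cons, List.getD_cons_succ] at ih ⊢
      rw [ih (by simpa using hp)]
      split_ifs <;> omega

lemma upAt_sub_downAt_toNat (hb : b < x.length) (c : ℤ) :
    ((upAt x c b).toNat : ℤ) - (downAt x (c + 1) b).toNat =
      (if c < pathHeight x (b + 1) then 1 else 0) - (if c < pathHeight x b then 1 else 0) := by
  rw [pathHeight_succ hb]
  simp only [upAt, downAt, isU, isD]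
  cases x.getD b true <;> by_cases h1 : pathHeight x b = c <;>
    by_cases h2 : pathHeight x b = c + 1 <;> simp [h1, h2, stepVal] <;> split_ifs <;> omega

lemma countIco_upAt_sub_countIco_downAt (x : List Bool) (c : ℤ) (hab : a ≤ b) (hb : b ≤ x.length) :
    countIco (upAt x c) a b - countIco (downAt x (c + 1)) a b =
      (if c < pathHeight x b then 1 else 0) - (if c < pathHeight x a then 1 else 0) := by
  induction b, hab using Nat.le_induction with
  | base => simp [countIco_self]
  | succ b hab ih =>
    have := ih (by omega)
    have := upAt_sub_downAt_toNat (x := x) (by omega : b < x.length) c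
    rw [countIco_succ hab, countIco_succ hab]
    omega

lemma two_mul_countIco_isD (hb : b ≤ x.length) :
    2 * countIco (isD x) 0 b = b - pathHeight x b := by
  induction b with
  | zero => simp [countIco_self, pathHeight_zero]
  | succ b ih =>
    rw [countIco_succ b.zero_le, pathHeight_succ (by omega)]
    have := ih (by omega)
    simp only [isD]
    cases x.getD b true <;> simp [stepVal] <;> omega

end path

section touch

variable {x : List Bool} {p q j : ℕ} {v : Bool}

lemma pathHeight_set_of_le (h : j ≤ p) : pathHeight (x.set p v) j = pathHeight x j := by
  rw [pathHeight, pathHeight, List.take_set_of_le h]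

lemma upAt_set_of_lt {c : ℤ} (h : j < p) : upAt (x.set p v) c j = upAt x c j := by
  simp only [upAt, isU, getD_set_of_ne h.ne', pathHeight_set_of_le h.le]

lemma touchU_set_of_lt (h : j < p) : touchU (x.set p v) j = touchU x j := by
  simp only [touchU, upAt_set_of_lt h]

lemma dtouch_zero (x : List Bool) : dtouch x 0 = (List.range x.length).filter (touchD x) := by
  simp only [dtouch, zero_add, Bool.and_or_distrib_left]
  rfl

lemma utouch_one (x : List Bool) : utouch x 1 = (List.range x.length).filter (touchU x) := by
  simp only [utouch, sub_self, Bool.and_or_distrib_left, Bool.or_comm]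
  rfl

lemma countIco_touchD {a b : ℕ} :
    countIco (touchD x) a b = countIco (downAt x 0) a b + countIco (downAt x 1) a b :=
  countIco_eq_add fun i _ _ => by
    simp only [touchD, downAt]; cases isD x i <;> by_cases h : pathHeight x i = 0 <;> simp [h]

lemma countIco_touchU {a b : ℕ} :
    countIco (touchU x) a b = countIco (upAt x 0) a b + countIco (upAt x 1) a b :=
  countIco_eq_add fun i _ _ => by
    simp only [touchU, upAt]; cases isU x i <;> by_cases h : pathHeight x i = 0 <;> simp [h]

lemma touchD_eq_true {i : ℕ} :
    touchD x i = true ↔ x.getD i true = false ∧ (pathHeight x i = 0 ∨ pathHeight x i = 1) := by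
  simp [touchD, downAt, isD, ← and_or_left]

lemma touchU_eq_true {i : ℕ} :
    touchU x i = true ↔ x.getD i true = true ∧ (pathHeight x i = 0 ∨ pathHeight x i = 1) := by
  simp [touchU, upAt, isU, ← and_or_left]

end touch

section startCounts

variable (x : List Bool)

lemma flaws_eq_countIco : (flaws x : ℤ) = countIco (flawAt x) 0 x.length :=
  length_filter_range _ _

lemma dstart_eq_countIco (c : ℤ) : (dstart x c : ℤ) = countIco (downAt x c) 0 x.length :=
  length_filter_range _ _

lemma ustart_eq_countIco (c : ℤ) : (ustart x c : ℤ) = countIco (upAt x c) 0 x.length :=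
  length_filter_range _ _

end startCounts

section gh

variable {x : List Bool} {p : ℕ}

lemma countIco_downAt_one_pos (hend : pathHeight x x.length = 0)
    (hflaws : (flaws x : ℤ) < countIco (isD x) 0 x.length) :
    0 < countIco (downAt x 1) 0 x.length := by
  have hsplit : countIco (isD x) 0 x.length = countIco (flawAt x) 0 x.length +
      countIco (fun i => isD x i && decide (0 < pathHeight x i)) 0 x.length :=
    countIco_eq_add fun i _ _ => by
      simp only [flawAt]
      cases isD x i <;> by_cases h : pathHeight x i ≤ 0 <;> by_cases h' : 0 < pathHeight x i <;>
        simp [h, h'] <;> omega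
  rw [flaws_eq_countIco] at hflaws
  obtain ⟨j, -, hj, hjD⟩ := exists_of_countIco_pos (by linarith)
  simp only [Bool.and_eq_true, decide_eq_true_eq] at hjD
  have hcross := countIco_upAt_sub_countIco_downAt x 0 hj.le le_rfl
  rw [hend, if_neg (lt_irrefl 0), if_pos hjD.2, zero_add] at hcross
  have := countIco_add (P := downAt x 1) j.zero_le hj.le
  have := countIco_nonneg (P := downAt x 1) (a := 0) (b := j)
  have := countIco_nonneg (P := upAt x 0) (a := j) (b := x.length)
  linarith

lemma gIdx_spec (hD1 : 0 < countIco (downAt x 1) 0 x.length) :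
    gIdx x < x.length ∧ touchD x (gIdx x) = true ∧
      countIco (touchD x) 0 (gIdx x) = countIco (downAt x 0) 0 x.length := by
  have hlt : dstart x 0 < ((List.range x.length).filter (touchD x)).length := by
    have := dstart_eq_countIco x 0
    have := length_filter_range (touchD x) x.length
    rw [countIco_touchD] at this
    omega
  obtain ⟨p, hp, hpD, hcnt⟩ := exists_length_filter_range_eq hlt
  have hg : gIdx x = p := by rw [gIdx, dtouch_zero, ← hcnt, getD_filter_range hp hpD]
  rw [hg, ← length_filter_range, hcnt, dstart_eq_countIco]
  exact ⟨hp, hpD, rfl⟩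

lemma countIco_upAt_zero_eq (hp : p < x.length)
    (hcnt : countIco (touchD x) 0 p = countIco (downAt x 0) 0 x.length) :
    countIco (upAt x 0) 0 p =
      countIco (downAt x 0) p x.length + if 0 < pathHeight x p then 1 else 0 := by
  have hcross := countIco_upAt_sub_countIco_downAt x 0 p.zero_le hp.le
  rw [pathHeight_zero, if_neg (lt_irrefl 0)] at hcross
  rw [countIco_touchD, ← countIco_add p.zero_le hp.le] at hcnt
  norm_num at hcross
  linarith

lemma pathHeight_set_true (hp : p < x.length) (hxp : x.getD p true = false) (j : ℕ) :
    pathHeight (x.set p true) j = pathHeight x j + if p < j then 2 else 0 := by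
  rw [pathHeight_set hp, hxp]; norm_num [stepVal]

lemma ustart_set_eq_countIco_touchU (hend : pathHeight x x.length = 0) (hp : p < x.length)
    (hpD : touchD x p = true) (hcnt : countIco (touchD x) 0 p = countIco (downAt x 0) 0 x.length) :
    (ustart (x.set p true) 1 : ℤ) = countIco (touchU x) 0 p := by
  obtain ⟨hxp, hhp⟩ := touchD_eq_true.1 hpD
  have hH := pathHeight_set_true hp hxp
  have hbefore : countIco (upAt (x.set p true) 1) 0 p = countIco (upAt x 1) 0 p :=
    countIco_congr fun j _ hj => upAt_set_of_lt hj
  have hat : ((upAt (x.set p true) 1 p).toNat : ℤ) = if pathHeight x p = 1 then 1 else 0 := by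
    simp only [upAt, isU, getD_set_self hp, hH, lt_irrefl, if_false, add_zero]
    split_ifs <;> simp [*]
  have hafter : countIco (upAt (x.set p true) 1) (p + 1) x.length =
      countIco (upAt x (-1)) (p + 1) x.length :=
    countIco_congr fun j hj _ => by
      simp only [upAt, isU, getD_set_of_ne (show p ≠ j by omega), hH, if_pos (show p < j by omega)]
      congr 2
      simp only [eq_iff_iff]
      omega
  have hupAt_p : upAt x (-1) p = false := by simp only [upAt, isU, hxp, Bool.false_and]
  have hcross := countIco_upAt_sub_countIco_downAt x (-1) hp.le le_rfl
  rw [hend, countIco_eq_toNat_add hp, hupAt_p] at hcross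
  have hU0 := countIco_upAt_zero_eq hp hcnt
  rw [ustart_eq_countIco, List.length_set, ← countIco_add p.zero_le hp.le, countIco_eq_toNat_add hp,
    hbefore, hat, hafter, countIco_touchU]
  norm_num at hcross
  rcases hhp with h | h <;> simp [h] at hcross hU0 ⊢ <;> linarith

lemma hIdx_set_spec (hend : pathHeight x x.length = 0) (hp : p < x.length)
    (hpD : touchD x p = true) (hcnt : countIco (touchD x) 0 p = countIco (downAt x 0) 0 x.length) :
    ∃ q < p, touchU x q = true ∧ countIco (touchU x) (q + 1) p = 0 ∧ hIdx (x.set p true) = q := by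
  have hU := ustart_set_eq_countIco_touchU hend hp hpD hcnt
  have hpos : 0 < countIco (touchU x) 0 p := by
    obtain ⟨hxp, hhp⟩ := touchD_eq_true.1 hpD
    have hU0 := countIco_upAt_zero_eq hp hcnt
    rw [countIco_eq_toNat_add hp] at hU0
    have := countIco_nonneg (P := downAt x 0) (a := p + 1) (b := x.length)
    have := countIco_nonneg (P := upAt x 1) (a := 0) (b := p)
    rw [countIco_touchU]
    simp only [downAt, isD, hxp] at hU0
    rcases hhp with h | h <;> simp [h] at hU0 <;> linarith
  have hlt : ustart (x.set p true) 1 - 1 < ((List.range p).filter (touchU x)).length := by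
    have := length_filter_range (touchU x) p
    omega
  obtain ⟨q, hqp, hqU, hq⟩ := exists_length_filter_range_eq hlt
  refine ⟨q, hqp, hqU, ?_, ?_⟩
  · have := length_filter_range (touchU x) q
    have := countIco_add (P := touchU x) q.zero_le hqp.le
    rw [countIco_eq_toNat_add hqp, hqU] at this
    simp only [Bool.toNat_true] at this
    omega
  · have hfilter : (List.range q).filter (touchU (x.set p true)) =
        (List.range q).filter (touchU x) :=
      List.filter_congr fun j hj => touchU_set_of_lt ((List.mem_range.1 hj).trans hqp)
    rw [hIdx, utouch_one, ← hq, ← hfilter,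
      getD_filter_range (by simp; omega) (by rw [touchU_set_of_lt hqp]; exact hqU)]

end gh

section swap

variable {x : List Bool} {p q j : ℕ}

lemma pathHeight_set_set (hqp : q < p) (hp : p < x.length) (hxq : x.getD q true = true)
    (hxp : x.getD p true = false) (j : ℕ) :
    pathHeight ((x.set p true).set q false) j =
      pathHeight x j + (if p < j then 2 else 0) - (if q < j then 2 else 0) := by
  rw [pathHeight_set (by simp; omega), getD_set_of_ne hqp.ne', hxq, pathHeight_set_true hp hxp]
  split_ifs <;> norm_num [stepVal]; ring

lemma count_true_set_set (hqp : q < p) (hp : p < x.length) (hxq : x.getD q true = true)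
    (hxp : x.getD p true = false) :
    ((x.set p true).set q false).count true = x.count true := by
  have h := pathHeight_length ((x.set p true).set q false)
  rw [pathHeight_set_set hqp hp hxq hxp, List.length_set, List.length_set, pathHeight_length,
    if_pos hp, if_pos (hqp.trans hp)] at h
  omega

lemma flawAt_set_set (hqp : q < p) (hp : p < x.length) (hxq : x.getD q true = true)
    (hxp : x.getD p true = false) (hj : j < q ∨ p < j) :
    flawAt ((x.set p true).set q false) j = flawAt x j := by
  simp only [flawAt, isD, getD_set_of_ne (show q ≠ j by omega),
    getD_set_of_ne (show p ≠ j by omega), pathHeight_set_set hqp hp hxq hxp]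
  rcases hj with hj | hj
  · simp [show ¬p < j by omega, show ¬q < j by omega]
  · simp [hj, hqp.trans hj]

lemma countIco_flawAt_set_set_between (hqp : q < p) (hp : p < x.length)
    (hxq : x.getD q true = true) (hxp : x.getD p true = false) :
    countIco (flawAt ((x.set p true).set q false)) (q + 1) p = countIco (flawAt x) (q + 1) p +
      (countIco (downAt x 1) (q + 1) p + countIco (downAt x 2) (q + 1) p) := by
  have hdown : countIco (fun j => downAt x 1 j || downAt x 2 j) (q + 1) p =
      countIco (downAt x 1) (q + 1) p + countIco (downAt x 2) (q + 1) p :=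
    countIco_eq_add fun j _ _ => by
      simp only [downAt]; cases isD x j <;> by_cases h : pathHeight x j = 1 <;> simp [h]
  rw [← hdown]
  refine countIco_eq_add fun j hj hjp => ?_
  simp only [flawAt, downAt, isD, getD_set_of_ne (show q ≠ j by omega),
    getD_set_of_ne (show p ≠ j by omega), pathHeight_set_set hqp hp hxq hxp,
    if_neg (show ¬p < j by omega), if_pos (show q < j by omega)]
  cases x.getD j true
  · simp only [Bool.toNat, Bool.not_false, Bool.true_and, ← Bool.decide_or, Bool.cond_decide]
    split_ifs <;> omega
  · simp

lemma flaws_set_set_eq (hqp : q < p) (hp : p < x.length) (hxq : x.getD q true = true)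
    (hxp : x.getD p true = false) :
    (flaws ((x.set p true).set q false) : ℤ) =
      flaws x + (if pathHeight x q ≤ 0 then 1 else 0) - (if pathHeight x p ≤ 0 then 1 else 0) +
        (countIco (downAt x 1) (q + 1) p + countIco (downAt x 2) (q + 1) p) := by
  have hbefore : countIco (flawAt ((x.set p true).set q false)) 0 q = countIco (flawAt x) 0 q :=
    countIco_congr fun j _ hj => flawAt_set_set hqp hp hxq hxp (.inl hj)
  have hafter : countIco (flawAt ((x.set p true).set q false)) (p + 1) x.length =
      countIco (flawAt x) (p + 1) x.length :=
    countIco_congr fun j hj _ => flawAt_set_set hqp hp hxq hxp (.inr hj)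
  have hyq : flawAt ((x.set p true).set q false) q = decide (pathHeight x q ≤ 0) := by
    simp only [flawAt, isD, getD_set_self (show q < (x.set p true).length by simp; omega),
      pathHeight_set_set hqp hp hxq hxp, if_neg (show ¬p < q by omega), lt_irrefl, if_false,
      add_zero, sub_zero, Bool.not_false, Bool.true_and]
  have hyp : flawAt ((x.set p true).set q false) p = false := by
    simp only [flawAt, isD, getD_set_of_ne hqp.ne, getD_set_self hp, Bool.not_true,
      Bool.false_and]
  have hxq' : flawAt x q = false := by simp only [flawAt, isD, hxq, Bool.not_true, Bool.false_and]
  have hxp' : flawAt x p = decide (pathHeight x p ≤ 0) := by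
    simp only [flawAt, isD, hxp, Bool.not_false, Bool.true_and]
  rw [flaws_eq_countIco, flaws_eq_countIco, List.length_set, List.length_set,
    countIco_split _ hqp hp, countIco_split (flawAt x) hqp hp, hbefore, hafter,
    countIco_flawAt_set_set_between hqp hp hxq hxp, hyq, hyp, hxq', hxp']
  split_ifs <;> simp [*] <;> ring

lemma countIco_downAt_one_add_two (hqp : q < p) (hp : p < x.length) (hqU : touchU x q = true)
    (hpD : touchD x p = true) (hgap : countIco (touchU x) (q + 1) p = 0) :
    countIco (downAt x 1) (q + 1) p + countIco (downAt x 2) (q + 1) p =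
      pathHeight x q + 1 - pathHeight x p := by
  obtain ⟨hxq, hhq⟩ := touchU_eq_true.1 hqU
  obtain ⟨-, hhp⟩ := touchD_eq_true.1 hpD
  have hsucc : pathHeight x (q + 1) = pathHeight x q + 1 := by
    rw [pathHeight_succ (hqp.trans hp), hxq]; rfl
  have hcross0 := countIco_upAt_sub_countIco_downAt x 0 hqp hp.le
  have hcross1 := countIco_upAt_sub_countIco_downAt x 1 hqp hp.le
  rw [countIco_touchU] at hgap
  have := countIco_nonneg (P := upAt x 0) (a := q + 1) (b := p)
  have := countIco_nonneg (P := upAt x 1) (a := q + 1) (b := p)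
  norm_num at hcross1
  rcases hhq with h | h <;> rcases hhp with h' | h' <;>
    simp only [h, h', hsucc] at hcross0 hcross1 ⊢ <;> norm_num at hcross0 hcross1 ⊢ <;> linarith

lemma flaws_set_set (hqp : q < p) (hp : p < x.length) (hqU : touchU x q = true)
    (hpD : touchD x p = true) (hgap : countIco (touchU x) (q + 1) p = 0) :
    (flaws ((x.set p true).set q false) : ℤ) = flaws x + 1 := by
  obtain ⟨hxq, hhq⟩ := touchU_eq_true.1 hqU
  obtain ⟨hxp, hhp⟩ := touchD_eq_true.1 hpD
  rw [flaws_set_set_eq hqp hp hxq hxp, countIco_downAt_one_add_two hqp hp hqU hpD hgap]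
  split_ifs <;> omega

end swap

end LatticePath

open LatticePath

theorem f_increases_flaws (k e : ℕ) (he : e < k) (x : List Bool) (hx : x ∈ DyckSet k e) :
    fMap x ∈ DyckSet k (e+1) := by
  obtain ⟨hlen, hcount, hflaws⟩ := hx
  have hend : pathHeight x x.length = 0 := by rw [pathHeight_length]; omega
  have hD : countIco (isD x) 0 x.length = k := by
    have := two_mul_countIco_isD (x := x) le_rfl
    omega
  obtain ⟨hp, hpD, hcnt⟩ := gIdx_spec (countIco_downAt_one_pos hend (by omega))
  obtain ⟨q, hqp, hqU, hgap, hq⟩ := hIdx_set_spec hend hp hpD hcnt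
  have hf : fMap x = (x.set (gIdx x) true).set q false := by rw [fMap, hMap, gMap, hq]
  have hxq := (touchU_eq_true.1 hqU).1
  have hxp := (touchD_eq_true.1 hpD).1
  refine ⟨by simp [hf, hlen], by rw [hf, count_true_set_set hqp hp hxq hxp, hcount], ?_⟩
  have := flaws_set_set hqp hp hqU hpD hgap
  rw [hf]
  omega
end

section
/- For any k ≥ 1 and any odd ℓ ≥ 3, if the odd graph O_{2k+1} has a C_ℓ-factor, then the middle levels graph M_{2k+1} has a C_{2ℓ}-factor. -/
/-- The odd graph `O_{2k+1}`: vertices are the k-element subsets of `{1,...,2k+1}`,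
two sets adjacent iff they are disjoint. -/
def oddGraph (k : ℕ) : SimpleGraph {s : Finset (Fin (2*k+1)) // s.card = k} :=
  SimpleGraph.fromRel (fun s t => Disjoint s.1 t.1)

/-- The middle levels graph `M_{2k+1}`: vertices are the k-element and (k+1)-element
subsets of `{1,...,2k+1}`, two sets adjacent iff one is a subset of the other. -/
def middleGraph (k : ℕ) : SimpleGraph {s : Finset (Fin (2*k+1)) // s.card = k ∨ s.card = k+1} :=
  SimpleGraph.fromRel (fun s t => s.1 ⊂ t.1)

/-- `G` has a `C_ℓ`-factor consisting of `m` cycles: a family of `m` vertex-disjoint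
cycles, each of length `ℓ`, covering every vertex exactly once. -/
def HasCycleFactor {V : Type*} (G : SimpleGraph V) (ℓ m : ℕ) : Prop :=
  ∃ (v : Fin m → V) (c : ∀ i, G.Walk (v i) (v i)),
    (∀ i, (c i).IsCycle) ∧ (∀ i, (c i).length = ℓ) ∧
    ∀ x : V, ∃! i, x ∈ (c i).support

/-!
Identifying a `k`-set `x` with itself and a `(k+1)`-set with its complement makes `M_{2k+1}` the
bipartite double cover of `O_{2k+1}` (for `k ≥ 1`): `x ⊆ yᶜ` iff `x` and `y` are disjoint. Going
twice around an odd cycle of length `ℓ` while alternating between the two sheets of the cover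
returns to the starting sheet only after `2ℓ` steps, and meets both copies of every vertex of the
cycle exactly once; so a `C_ℓ`-factor lifts to a `C_{2ℓ}`-factor.
-/

namespace SimpleGraph

variable {V : Type*} {G : SimpleGraph V} {u v : V}

def sheet (n : ℕ) (v : V) : V ⊕ V := if Even n then .inl v else .inr v

lemma sheet_inj {m n : ℕ} {v w : V} (h : sheet m v = sheet n w) : v = w ∧ (Even m ↔ Even n) := by
  unfold sheet at h
  split_ifs at h <;> grind

@[simp]
lemma elim_sheet (n : ℕ) (v : V) : Sum.elim id id (sheet n v) = v := by
  unfold sheet; split_ifs <;> rfl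

lemma sheet_elim_or_sheet_add_odd (x : V ⊕ V) (n : ℕ) {l : ℕ} (hl : Odd l) :
    sheet n (Sum.elim id id x) = x ∨ sheet (n + l) (Sum.elim id id x) = x := by
  have : Even (n + l) ↔ ¬Even n := by simp [Nat.even_add, Nat.not_even_iff_odd.mpr hl]
  cases x <;> by_cases hn : Even n <;> simp [sheet, hn, this]

lemma Adj.bipartiteDoubleCover_sheet (h : G.Adj u v) (n : ℕ) :
    G.bipartiteDoubleCover.Adj (sheet n u) (sheet (n + 1) v) := by
  by_cases hn : Even n <;> simp [sheet, hn, Nat.even_add_one, h]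

lemma Walk.exists_lift_bipartiteDoubleCover (p : G.Walk u v) (n : ℕ) :
    ∃ W : G.bipartiteDoubleCover.Walk (sheet n u) (sheet (n + p.length) v),
      W.length = p.length ∧ ∀ i ≤ p.length, W.getVert i = sheet (n + i) (p.getVert i) := by
  induction p generalizing n with
  | nil => exact ⟨.nil, rfl, fun i hi => by simp_all⟩
  | cons h q ih =>
    obtain ⟨W, hWl, hWv⟩ := ih (n + 1)
    refine ⟨(Walk.cons (h.bipartiteDoubleCover_sheet n) W).copy rfl (by rw [length_cons]; ring_nf),
      by rw [length_copy, length_cons, length_cons, hWl], fun i hi => ?_⟩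
    cases i with
    | zero => simp
    | succ i =>
      rw [getVert_copy, getVert_cons_succ, getVert_cons_succ, hWv i (by simpa using hi),
        add_right_comm, add_assoc]

lemma Walk.exists_lift_bipartiteDoubleCover_append_self (p : G.Walk u u) :
    ∃ W : G.bipartiteDoubleCover.Walk (.inl u) (.inl u), W.length = 2 * p.length ∧
      ∀ a ≤ 2 * p.length,
        W.getVert a = sheet a (p.getVert (if a ≤ p.length then a else a - p.length)) := by
  obtain ⟨W, hWl, hWv⟩ := (p.append p).exists_lift_bipartiteDoubleCover 0
  refine ⟨W.copy (by simp [sheet]) (by simp [sheet, length_append]),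
    by rw [length_copy, hWl, length_append, two_mul], fun a ha => ?_⟩
  rw [getVert_copy, hWv a (by rw [length_append]; omega), zero_add, getVert_append']
  split_ifs <;> rfl

lemma Walk.isCycle_of_injOn_getVert {p : G.Walk u u} (hp : 3 ≤ p.length)
    (hinj : Set.InjOn p.getVert {i | 1 ≤ i ∧ i ≤ p.length}) : p.IsCycle := by
  have hlen := length_tail_add_one (p := p) (by rw [← length_eq_zero_iff]; omega)
  rw [isCycle_iff_isPath_tail_and_le_length, ← IsPath.getVert_injOn_iff]
  refine ⟨fun i hi j hj hij => ?_, hp⟩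
  simp only [Set.mem_ofPred_eq, getVert_tail] at hi hj hij
  have := hinj (by simp only [Set.mem_ofPred_eq]; omega)
    (by simp only [Set.mem_ofPred_eq]; omega) hij
  omega

lemma Walk.IsCycle.exists_lift_bipartiteDoubleCover {p : G.Walk u u} (hp : p.IsCycle)
    (hodd : Odd p.length) :
    ∃ W : G.bipartiteDoubleCover.Walk (.inl u) (.inl u), W.IsCycle ∧ W.length = 2 * p.length ∧
      ∀ x, x ∈ W.support ↔ Sum.elim id id x ∈ p.support := by
  set l := p.length
  obtain ⟨W, hWl, hW⟩ := p.exists_lift_bipartiteDoubleCover_append_self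
  have hl := hp.three_le_length
  refine ⟨W, isCycle_of_injOn_getVert (by omega) fun a ha b hb hab => ?_, hWl, fun x => ?_⟩
  · simp only [Set.mem_ofPred_eq, hWl] at ha hb
    rw [hW a ha.2, hW b hb.2] at hab
    obtain ⟨hv, hpar⟩ := sheet_inj hab
    have := hp.getVert_injOn (by simp only [Set.mem_ofPred_eq]; split_ifs <;> omega)
      (by simp only [Set.mem_ofPred_eq]; split_ifs <;> omega) hv
    -- `a` and `a + l` lie over the same vertex of `p` but, `l` being odd, on different sheets
    rw [Nat.even_iff, Nat.even_iff] at hpar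
    obtain ⟨r, hr⟩ := hodd
    split_ifs at this <;> omega
  rw [mem_support_iff_exists_getVert, mem_support_iff_exists_getVert]
  constructor
  · rintro ⟨a, rfl, ha⟩
    rw [hW a (hWl ▸ ha), elim_sheet]
    exact ⟨_, rfl, by split_ifs <;> omega⟩
  · rintro ⟨j, hj, hjl⟩
    obtain ⟨j, hj, hj₁, hjl⟩ : ∃ j', p.getVert j' = Sum.elim id id x ∧ 1 ≤ j' ∧ j' ≤ l := by
      rcases Nat.eq_zero_or_pos j with rfl | hj₀
      · exact ⟨l, by rw [getVert_length, ← hj, getVert_zero], by omega, le_rfl⟩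
      · exact ⟨j, hj, hj₀, hjl⟩
    rcases sheet_elim_or_sheet_add_odd x j hodd with h | h
    · exact ⟨j, by rw [hW j (by omega), if_pos hjl, hj, h], by omega⟩
    · exact ⟨j + l, by rw [hW (j + l) (by omega), if_neg (by omega), Nat.add_sub_cancel, hj, h],
        by omega⟩

end SimpleGraph

lemma Finset.ssubset_or_ssubset_iff_of_card_lt {α : Type*} {s t : Finset α}
    (h : s.card < t.card) : s ⊂ t ∨ t ⊂ s ↔ s ⊆ t := by
  refine ⟨fun hst => hst.elim subset_of_ssubset fun hts => ?_, fun hst => .inl ?_⟩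
  · exact absurd (Finset.card_lt_card hts) (by omega)
  · exact Finset.ssubset_iff_subset_ne.2 ⟨hst, by rintro rfl; omega⟩

lemma Finset.not_ssubset_or_ssubset_of_card_eq {α : Type*} {s t : Finset α}
    (h : s.card = t.card) : ¬(s ⊂ t ∨ t ⊂ s) := by
  rintro (hst | hts)
  · exact absurd (Finset.card_lt_card hst) (by omega)
  · exact absurd (Finset.card_lt_card hts) (by omega)

section MiddleLevels

variable {k : ℕ}

lemma card_compl_of_card_eq {s : Finset (Fin (2 * k + 1))} (h : s.card = k) :
    sᶜ.card = k + 1 := by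
  rw [Finset.card_compl, Fintype.card_fin, h]; omega

lemma card_compl_of_card_eq_add_one {s : Finset (Fin (2 * k + 1))} (h : s.card = k + 1) :
    sᶜ.card = k := by
  rw [Finset.card_compl, Fintype.card_fin, h]; omega

def middleLevelsEquiv (k : ℕ) :
    {s : Finset (Fin (2 * k + 1)) // s.card = k} ⊕ {s : Finset (Fin (2 * k + 1)) // s.card = k} ≃
      {s : Finset (Fin (2 * k + 1)) // s.card = k ∨ s.card = k + 1} where
  toFun := Sum.elim (fun s => ⟨s, .inl s.2⟩) (fun s => ⟨s.1ᶜ, .inr (card_compl_of_card_eq s.2)⟩)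
  invFun s := if h : s.1.card = k then .inl ⟨s, h⟩
    else .inr ⟨s.1ᶜ, card_compl_of_card_eq_add_one (s.2.resolve_left h)⟩
  left_inv x := by rcases x with s | s <;> simp [s.2, card_compl_of_card_eq s.2]
  right_inv s := by by_cases h : s.1.card = k <;> simp [h]

lemma oddGraph_adj_iff (hk : 1 ≤ k) {s t : {s : Finset (Fin (2 * k + 1)) // s.card = k}} :
    (oddGraph k).Adj s t ↔ Disjoint s.1 t.1 := by
  rw [oddGraph, SimpleGraph.fromRel_adj, disjoint_comm, or_self]
  refine and_iff_right_of_imp fun hd hst => ?_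
  subst hst
  have := s.2
  simp_all only [disjoint_self, Finset.bot_eq_empty, Finset.card_empty]
  omega

lemma middleGraph_adj_iff {s t : {s : Finset (Fin (2 * k + 1)) // s.card = k ∨ s.card = k + 1}} :
    (middleGraph k).Adj s t ↔ s.1 ⊂ t.1 ∨ t.1 ⊂ s.1 := by
  rw [middleGraph, SimpleGraph.fromRel_adj]
  exact and_iff_right_of_imp fun _ hst => by subst hst; simp_all

def oddGraphDoubleCoverIso (hk : 1 ≤ k) : (oddGraph k).bipartiteDoubleCover ≃g middleGraph k where
  toEquiv := middleLevelsEquiv k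
  map_rel_iff' {a b} := by
    rw [middleGraph_adj_iff]
    rcases a with s | s <;> rcases b with t | t <;>
      simp only [middleLevelsEquiv, Equiv.coe_fn_mk, Sum.elim_inl, Sum.elim_inr,
        SimpleGraph.bipartiteDoubleCover, oddGraph_adj_iff hk]
    · exact iff_of_false (Finset.not_ssubset_or_ssubset_of_card_eq (s.2.trans t.2.symm)) id
    · rw [Finset.ssubset_or_ssubset_iff_of_card_lt (by rw [s.2, card_compl_of_card_eq t.2]; omega),
        Finset.subset_compl_iff_disjoint_right]
    · rw [or_comm,
        Finset.ssubset_or_ssubset_iff_of_card_lt (by rw [t.2, card_compl_of_card_eq s.2]; omega),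
        Finset.subset_compl_iff_disjoint_left]
    · exact iff_of_false (Finset.not_ssubset_or_ssubset_of_card_eq
        ((card_compl_of_card_eq s.2).trans (card_compl_of_card_eq t.2).symm)) id

end MiddleLevels

section CycleFactor

variable {V : Type*} {G : SimpleGraph V} {ℓ m : ℕ}

lemma HasCycleFactor.map_iso {W : Type*} {H : SimpleGraph W} (e : G ≃g H)
    (h : HasCycleFactor G ℓ m) : HasCycleFactor H ℓ m := by
  obtain ⟨v, c, hcyc, hlen, hcov⟩ := h
  refine ⟨fun i => e (v i), fun i => (c i).map e.toHom,
    fun i => (SimpleGraph.Walk.isCycle_map_iff_of_injective e.injective).2 (hcyc i),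
    fun i => by rw [SimpleGraph.Walk.length_map, hlen i], fun x => ?_⟩
  have hmem (i) : x ∈ ((c i).map e.toHom).support ↔ e.symm x ∈ (c i).support := by
    rw [SimpleGraph.Walk.support_map, ← List.mem_map_of_injective e.injective]
    simp
  simpa only [hmem] using hcov (e.symm x)

lemma HasCycleFactor.bipartiteDoubleCover (hℓ : Odd ℓ) (h : HasCycleFactor G ℓ m) :
    HasCycleFactor G.bipartiteDoubleCover (2 * ℓ) m := by
  obtain ⟨v, c, hcyc, hlen, hcov⟩ := h
  choose W hW using fun i => (hcyc i).exists_lift_bipartiteDoubleCover ((hlen i).symm ▸ hℓ)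
  refine ⟨fun i => .inl (v i), W, fun i => (hW i).1, fun i => by rw [(hW i).2.1, hlen i],
    fun x => ?_⟩
  simpa only [(hW _).2.2] using hcov (Sum.elim id id x)

end CycleFactor

theorem transfer_cycle_factor_general (k l : ℕ) (hk : 1 ≤ k) (hodd : Odd l)
    (h : ∃ m, HasCycleFactor (oddGraph k) l m) :
    ∃ m', HasCycleFactor (middleGraph k) (2*l) m' := by
  obtain ⟨m, hm⟩ := h
  exact ⟨m, (hm.bipartiteDoubleCover hodd).map_iso (oddGraphDoubleCoverIso hk)⟩

theorem transfer_cycle_factor (k l : ℕ) (hk : 1 ≤ k) (hodd : Odd l) (hl : 3 ≤ l)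
    (h : ∃ m, HasCycleFactor (oddGraph k) l m) :
    ∃ m', HasCycleFactor (middleGraph k) (2*l) m' :=
  transfer_cycle_factor_general k l hk hodd h
end
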